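/- Let R be a real closed extension field of ℝ, let M be an Archimedean quadratic module of 𝒪_R[X₁,…,Xₙ], and let x ∈ 𝒪_Rⁿ. Then u_x := (X₁ − x₁)² + … + (Xₙ − xₙ)² is a unit for the cone M ∩ I_x² in the real vector space I_x², i.e., for every p ∈ I_x² there exists N ∈ ℕ with N·u_x + p ∈ M ∩ I_x². -/

import Mathlib

open MvPolynomial Finset

noncomputable section

/-- The subring of finite elements of a linearly ordered field. -/
def Ofin (R : Type) [Field R] [LinearOrder R] [IsStrictOrderedRing R] : Subring R where
  carrier := {a : R | ∃ N : ℕ, |a| ≤ (N : R)}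
  zero_mem' := ⟨0, by simp⟩
  one_mem' := ⟨1, by simp⟩
  add_mem' := by
    rintro a b ⟨N, hN⟩ ⟨M, hM⟩
    exact ⟨N + M, by push_cast; exact (abs_add_le a b).trans (add_le_add hN hM)⟩
  mul_mem' := by
    rintro a b ⟨N, hN⟩ ⟨M, hM⟩
    refine ⟨N * M, ?_⟩
    push_cast
    calc |a * b| = |a| * |b| := abs_mul a b
    _ ≤ (N : _) * (M : _) := mul_le_mul hN hM (abs_nonneg b) (Nat.cast_nonneg N)
  neg_mem' := by
    rintro a ⟨N, hN⟩
    exact ⟨N, by rwa [abs_neg]⟩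

/-- A real closed extension field of `ℝ`: an order-preserving ring embedding `ι : ℝ →+* R`
such that every nonnegative element of `R` is a square and every polynomial over `R` of
odd degree has a root. -/
structure RealClosedExt (R : Type) [Field R] [LinearOrder R] [IsStrictOrderedRing R] where
  ι : ℝ →+* R
  mono : ∀ a b : ℝ, a ≤ b → ι a ≤ ι b
  sq : ∀ a : R, 0 ≤ a → ∃ b : R, b ^ 2 = a
  oddRoot : ∀ p : Polynomial R, Odd p.natDegree → ∃ x : R, p.eval x = 0

/-- An infinitesimal element of a linearly ordered field. -/
def Infinitesimal {R : Type} [Field R] [LinearOrder R] [IsStrictOrderedRing R] (a : R) : Prop :=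
  ∀ N : ℕ, 0 < N → |a| ≤ (N : R)⁻¹

/-- `st` is a standard part map if `a - ι (st a)` is infinitesimal for every finite `a`. -/
def IsStandardPart {R : Type} [Field R] [LinearOrder R] [IsStrictOrderedRing R] (e : RealClosedExt R) (st : R → ℝ) : Prop :=
  ∀ a : R, a ∈ Ofin R → Infinitesimal (a - e.ι (st a))

/-- The embedding `ℝ →+* 𝒪_R` induced by `ι`. -/
def RealClosedExt.toOfin {R : Type} [Field R] [LinearOrder R] [IsStrictOrderedRing R] (e : RealClosedExt R) :
    ℝ →+* Ofin R where
  toFun r := ⟨e.ι r, by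
    refine ⟨⌈|r|⌉₊, ?_⟩
    have h2 : |e.ι r| ≤ e.ι |r| := by
      rw [abs_le]
      constructor
      · have h := e.mono (-|r|) r (neg_abs_le r)
        rwa [map_neg] at h
      · exact e.mono r |r| (le_abs_self r)
    refine h2.trans ?_
    have h3 := e.mono |r| (⌈|r|⌉₊ : ℝ) (Nat.le_ceil _)
    rwa [map_natCast] at h3⟩
  map_one' := Subtype.ext (map_one e.ι)
  map_mul' a b := Subtype.ext (map_mul e.ι a b)
  map_zero' := Subtype.ext (map_zero e.ι)
  map_add' a b := Subtype.ext (map_add e.ι a b)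

/-- Quadratic module of a commutative ring. -/
def IsQuadraticModule {A : Type*} [CommRing A] (M : Set A) : Prop :=
  (0 : A) ∈ M ∧ (1 : A) ∈ M ∧ (∀ a ∈ M, ∀ b ∈ M, a + b ∈ M) ∧
    ∀ a : A, ∀ p ∈ M, a ^ 2 * p ∈ M

/-- Archimedean subset of a commutative ring. -/
def IsArchimedean {A : Type*} [CommRing A] (M : Set A) : Prop :=
  ∀ a : A, ∃ N : ℕ, (N : A) + a ∈ M ∧ (N : A) - a ∈ M

/-- The ideal `I_x` generated by the `X i - x i`. -/
def idealAt {R : Type} [Field R] [LinearOrder R] [IsStrictOrderedRing R] {n : ℕ} (x : Fin n → Ofin R) :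
    Ideal (MvPolynomial (Fin n) (Ofin R)) :=
  Ideal.span (Set.range fun i => X i - C (x i))

/-- The polynomial `u_x = (X₁-x₁)² + … + (Xₙ-xₙ)²` over `𝒪_R`. -/
def uPolyO {R : Type} [Field R] [LinearOrder R] [IsStrictOrderedRing R] {n : ℕ} (x : Fin n → Ofin R) :
    MvPolynomial (Fin n) (Ofin R) :=
  ∑ i, (X i - C (x i)) ^ 2

/-- Evaluation of a polynomial with coefficients in `𝒪_R` at a point of `Rⁿ`. -/
def evalR {R : Type} [Field R] [LinearOrder R] [IsStrictOrderedRing R] {n : ℕ} (x : Fin n → R)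
    (p : MvPolynomial (Fin n) (Ofin R)) : R :=
  eval₂ (Ofin R).subtype x p

/-- `vᵀ (Hess p)(x) v`, computed in `R`, for a real vector `v`. -/
def hessQuadO {R : Type} [Field R] [LinearOrder R] [IsStrictOrderedRing R] (e : RealClosedExt R) {n : ℕ}
    (p : MvPolynomial (Fin n) (Ofin R)) (x : Fin n → Ofin R) (v : Fin n → ℝ) : R :=
  ∑ a, ∑ b, e.ι (v a) * ((eval x (pderiv a (pderiv b p)) : Ofin R) : R) * e.ι (v b)

/-- The set `S := {x ∈ ℝⁿ : st (p(x)) ≥ 0 for all p ∈ M}`. -/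
def Sof {R : Type} [Field R] [LinearOrder R] [IsStrictOrderedRing R] (e : RealClosedExt R) (st : R → ℝ) {n : ℕ}
    (M : Set (MvPolynomial (Fin n) (Ofin R))) : Set (Fin n → ℝ) :=
  {y | ∀ p ∈ M, 0 ≤ st (evalR (fun i => e.ι (y i)) p)}

/-- A state of `(I, M ∩ I, u)`: an `ℝ`-linear functional on `I`, nonnegative on `M ∩ I` and
normalized at `u` (encoded as a function on the polynomial ring whose values off `I`
are irrelevant). -/
def IsStateOn {R : Type} [Field R] [LinearOrder R] [IsStrictOrderedRing R] (e : RealClosedExt R) {n : ℕ}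
    (M : Set (MvPolynomial (Fin n) (Ofin R))) (I : Ideal (MvPolynomial (Fin n) (Ofin R)))
    (u : MvPolynomial (Fin n) (Ofin R)) (φ : MvPolynomial (Fin n) (Ofin R) → ℝ) : Prop :=
  (∀ p ∈ I, ∀ q ∈ I, φ (p + q) = φ p + φ q) ∧
  (∀ r : ℝ, ∀ p ∈ I, φ (C (e.toOfin r) * p) = r * φ p) ∧
  (∀ p ∈ I, p ∈ M → 0 ≤ φ p) ∧ φ u = 1

/-- A pure state: an extreme point of the state space (no two distinct states have it
as their midpoint). -/
def IsPureStateOn {R : Type} [Field R] [LinearOrder R] [IsStrictOrderedRing R] (e : RealClosedExt R) {n : ℕ}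
    (M : Set (MvPolynomial (Fin n) (Ofin R))) (I : Ideal (MvPolynomial (Fin n) (Ofin R)))
    (u : MvPolynomial (Fin n) (Ofin R)) (φ : MvPolynomial (Fin n) (Ofin R) → ℝ) : Prop :=
  IsStateOn e M I u φ ∧
    ∀ ψ₁ ψ₂, IsStateOn e M I u ψ₁ → IsStateOn e M I u ψ₂ →
      (∀ p ∈ I, φ p = (ψ₁ p + ψ₂ p) / 2) → ∀ p ∈ I, ψ₁ p = ψ₂ p

/-- A sum of squares in a commutative ring. -/
def IsSOS {A : Type*} [CommRing A] (p : A) : Prop :=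
  ∃ (k : ℕ) (q : Fin k → A), p = ∑ i, (q i) ^ 2

/-- The basic closed semialgebraic set `S(g)`. -/
def Sset {n m : ℕ} (g : Fin m → MvPolynomial (Fin n) ℝ) : Set (Fin n → ℝ) :=
  {x | ∀ i, 0 ≤ eval x (g i)}

/-- The quadratic module `M(g)` generated by `g` in `ℝ[X]`. -/
def QModGen {n m : ℕ} (g : Fin m → MvPolynomial (Fin n) ℝ) : Set (MvPolynomial (Fin n) ℝ) :=
  {f | ∃ (σ₀ : MvPolynomial (Fin n) ℝ) (σ : Fin m → MvPolynomial (Fin n) ℝ),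
    IsSOS σ₀ ∧ (∀ i, IsSOS (σ i)) ∧ f = σ₀ + ∑ i, σ i * g i}

/-- `g` extended by `g₀ := 1` (the index `none` corresponds to `g₀`). -/
def gext {n m : ℕ} (g : Fin m → MvPolynomial (Fin n) ℝ) :
    Option (Fin m) → MvPolynomial (Fin n) ℝ :=
  fun o => o.elim 1 g

/-- The `d`-truncated quadratic module `M_d(g)`: finite sums of terms `p² gᵢ`
(`g₀ := 1`), each of degree at most `d`. -/
def Mtrunc {n m : ℕ} (g : Fin m → MvPolynomial (Fin n) ℝ) (d : ℕ) :
    Set (MvPolynomial (Fin n) ℝ) :=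
  {f | ∃ (k : ℕ) (idx : Fin k → Option (Fin m)) (p : Fin k → MvPolynomial (Fin n) ℝ),
    (∀ j, ((p j) ^ 2 * gext g (idx j)).totalDegree ≤ d) ∧
      f = ∑ j, (p j) ^ 2 * gext g (idx j)}

/-- The polynomial `u_x = (X₁-x₁)² + … + (Xₙ-xₙ)²` over `ℝ`. -/
def uPoly {n : ℕ} (x : Fin n → ℝ) : MvPolynomial (Fin n) ℝ :=
  ∑ i, (X i - C (x i)) ^ 2

/-- The open Euclidean ball of radius `ε` around `x`. -/
def eball {n : ℕ} (x : Fin n → ℝ) (ε : ℝ) : Set (Fin n → ℝ) :=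
  {y | ∑ i, (y i - x i) ^ 2 < ε ^ 2}

/-- `vᵀ (Hess f)(x) v`, where `Hess f` is the formal Hessian matrix of `f`. -/
def hessQuad {n : ℕ} (f : MvPolynomial (Fin n) ℝ) (x : Fin n → ℝ) (v : Fin n → ℝ) : ℝ :=
  ∑ a, ∑ b, v a * eval x (pderiv a (pderiv b f)) * v b

/-- `(∇ f)(x)ᵀ v`. -/
def gradDot {n : ℕ} (f : MvPolynomial (Fin n) ℝ) (x v : Fin n → ℝ) : ℝ :=
  ∑ i, eval x (pderiv i f) * v i

/-- Strict quasiconcavity of `g` at `x`. -/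
def StrictQuasiconcaveAt {n : ℕ} (g : MvPolynomial (Fin n) ℝ) (x : Fin n → ℝ) : Prop :=
  ∀ v : Fin n → ℝ, v ≠ 0 → gradDot g x v = 0 → hessQuad g x v < 0

/-- The real zero set `Z(g)`. -/
def Zset {n : ℕ} (g : MvPolynomial (Fin n) ℝ) : Set (Fin n → ℝ) :=
  {x | eval x g = 0}

/-- The convex boundary `convbd S = S ∩ ∂(conv S)`. -/
def convbd {n : ℕ} (S : Set (Fin n → ℝ)) : Set (Fin n → ℝ) :=
  S ∩ frontier (convexHull ℝ S)

/-- The optimal value `las_d(f, g)` of the degree-`d` Lasserre relaxation. -/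
def lasVal {n m : ℕ} (g : Fin m → MvPolynomial (Fin n) ℝ) (d : ℕ)
    (f : MvPolynomial (Fin n) ℝ) : EReal :=
  ⨅ L : {L : MvPolynomial (Fin n) ℝ →ₗ[ℝ] ℝ // (∀ p ∈ Mtrunc g d, 0 ≤ L p) ∧ L 1 = 1},
    ((L.1 f : ℝ) : EReal)

/-- The degree-`d` Lasserre relaxation set `S_d(g)`. -/
def lasRelax {n m : ℕ} (g : Fin m → MvPolynomial (Fin n) ℝ) (d : ℕ) : Set (Fin n → ℝ) :=
  {y | ∃ L : MvPolynomial (Fin n) ℝ →ₗ[ℝ] ℝ,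
    (∀ p ∈ Mtrunc g d, 0 ≤ L p) ∧ L 1 = 1 ∧ ∀ i, L (X i) = y i}

end

/-! With `f_i = X_i - x_i`, the ideal `I_x²` is generated by the products `f_a f_b`, so it suffices
that `N u_x + h f_a f_b ∈ M` for all `h`. Since `M` is Archimedean, `K - h²/2 ∈ M` for some `K`,
and `2 h f_a f_b = (h f_a + f_b)² - h² f_a² - f_b²` shows that `N = K + 1` works: the negative
terms are absorbed by `(K + 1) u_x`. -/

namespace IsQuadraticModule

variable {A : Type*} [CommRing A] {M : Set A}

theorem add_mem (hM : IsQuadraticModule M) {a b : A} (ha : a ∈ M) (hb : b ∈ M) : a + b ∈ M :=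
  hM.2.2.1 a ha b hb

theorem sq_mul_mem (hM : IsQuadraticModule M) (a : A) {m : A} (hm : m ∈ M) : a ^ 2 * m ∈ M :=
  hM.2.2.2 a m hm

theorem sq_mem (hM : IsQuadraticModule M) (a : A) : a ^ 2 ∈ M := by
  simpa using hM.sq_mul_mem a hM.2.1

theorem sum_mem (hM : IsQuadraticModule M) {ι : Type*} (s : Finset ι) {f : ι → A}
    (hf : ∀ i ∈ s, f i ∈ M) : ∑ i ∈ s, f i ∈ M :=
  Finset.sum_induction f (· ∈ M) (fun _ _ => hM.add_mem) hM.1 hf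

theorem natCast_mul_mem (hM : IsQuadraticModule M) (N : ℕ) {m : A} (hm : m ∈ M) :
    (N : A) * m ∈ M := by
  simpa using hM.sum_mem (Finset.range N) fun _ _ => hm

theorem sum_sq_mem (hM : IsQuadraticModule M) {ι : Type*} (s : Finset ι) (f : ι → A) :
    ∑ i ∈ s, f i ^ 2 ∈ M :=
  hM.sum_mem s fun i _ => hM.sq_mem (f i)

theorem invOf_two_mul_sq_mem (hM : IsQuadraticModule M) [Invertible (2 : A)] (a : A) :
    ⅟2 * a ^ 2 ∈ M := by
  have h : ⅟2 * a ^ 2 = (⅟2 * a) ^ 2 + (⅟2 * a) ^ 2 := by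
    linear_combination (-(⅟2 : A) * a ^ 2) * mul_invOf_self (2 : A)
  rw [h]
  exact hM.add_mem (hM.sq_mem _) (hM.sq_mem _)

-- The largest ideal contained in `{p | ∃ N : ℕ, N * u + p ∈ M}`.
def dominatedIdeal (hM : IsQuadraticModule M) (u : A) : Ideal A where
  carrier := {p | ∀ r : A, ∃ N : ℕ, (N : A) * u + r * p ∈ M}
  zero_mem' _ := ⟨0, by simpa using hM.1⟩
  add_mem' {p q} hp hq r := by
    obtain ⟨N₁, hN₁⟩ := hp r
    obtain ⟨N₂, hN₂⟩ := hq r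
    refine ⟨N₁ + N₂, ?_⟩
    convert hM.add_mem hN₁ hN₂ using 1
    push_cast
    ring
  smul_mem' s p hp r := by
    obtain ⟨N, hN⟩ := hp (r * s)
    exact ⟨N, by rwa [smul_eq_mul, ← mul_assoc]⟩

theorem mul_mem_dominatedIdeal (hM : IsQuadraticModule M) (hArch : IsArchimedean M)
    [Invertible (2 : A)] {ι : Type*} [Fintype ι] (f : ι → A) (a b : ι) :
    f a * f b ∈ hM.dominatedIdeal (∑ i, f i ^ 2) := by
  classical
  intro h
  obtain ⟨K, -, hK⟩ := hArch (⅟2 * h ^ 2)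
  have hu_a := Finset.add_sum_erase univ (fun i => f i ^ 2) (mem_univ a)
  have hu_b := Finset.add_sum_erase univ (fun i => f i ^ 2) (mem_univ b)
  refine ⟨K + 1, ?_⟩
  have key : ((K + 1 : ℕ) : A) * ∑ i, f i ^ 2 + h * (f a * f b) =
      ⅟2 * (h * f a + f b) ^ 2 + f a ^ 2 * ((K : A) - ⅟2 * h ^ 2) + ⅟2 * f b ^ 2 +
        (K : A) * ∑ i ∈ univ.erase a, f i ^ 2 + ∑ i ∈ univ.erase b, f i ^ 2 := by
    push_cast
    linear_combination
      -(K : A) * hu_a - hu_b - (h * f a * f b + f b ^ 2) * mul_invOf_self (2 : A)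
  rw [key]
  refine hM.add_mem (hM.add_mem (hM.add_mem (hM.add_mem ?_ ?_) ?_) ?_) ?_
  · exact hM.invOf_two_mul_sq_mem _
  · exact hM.sq_mul_mem _ hK
  · exact hM.invOf_two_mul_sq_mem _
  · exact hM.natCast_mul_mem K (hM.sum_sq_mem _ _)
  · exact hM.sum_sq_mem _ _

end IsQuadraticModule

instance Ofin.invertibleTwo {R : Type} [Field R] [LinearOrder R] [IsStrictOrderedRing R] :
    Invertible (2 : Ofin R) where
  invOf := ⟨2⁻¹, 1, by rw [abs_of_pos (by norm_num)]; norm_num⟩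
  invOf_mul_self := Subtype.ext (show (2⁻¹ : R) * 2 = 1 by norm_num)
  mul_invOf_self := Subtype.ext (show (2 : R) * 2⁻¹ = 1 by norm_num)

noncomputable instance MvPolynomial.invertibleTwo {σ S : Type*} [CommSemiring S]
    [Invertible (2 : S)] :
    Invertible (2 : MvPolynomial σ S) :=
  (Invertible.map (C : S →+* MvPolynomial σ S) 2).copy 2 (map_ofNat C 2).symm

theorem uPolyO_mem_sq_idealAt {R : Type} [Field R] [LinearOrder R] [IsStrictOrderedRing R] {n : ℕ}
    (x : Fin n → Ofin R) : uPolyO x ∈ idealAt x ^ 2 := by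
  refine Ideal.sum_mem _ fun i _ => ?_
  rw [sq, sq]
  exact Ideal.mul_mem_mul (Ideal.subset_span ⟨i, rfl⟩) (Ideal.subset_span ⟨i, rfl⟩)

theorem statement_2_general {R : Type} [Field R] [LinearOrder R] [IsStrictOrderedRing R] {n : ℕ}
    (M : Set (MvPolynomial (Fin n) (Ofin R))) (hM : IsQuadraticModule M)
    (hArch : IsArchimedean M) (x : Fin n → Ofin R) :
    ∀ p ∈ (idealAt x) ^ 2, ∃ N : ℕ,
      (N : MvPolynomial (Fin n) (Ofin R)) * uPolyO x + p ∈ M ∧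
      (N : MvPolynomial (Fin n) (Ofin R)) * uPolyO x + p ∈ (idealAt x) ^ 2 := by
  intro p hp
  have hle : idealAt x ^ 2 ≤ hM.dominatedIdeal (uPolyO x) := by
    rw [sq, idealAt, Ideal.span_mul_span', Ideal.span_le]
    rintro _ ⟨_, ⟨a, rfl⟩, _, ⟨b, rfl⟩, rfl⟩
    exact hM.mul_mem_dominatedIdeal hArch _ a b
  obtain ⟨N, hN⟩ := hle hp 1
  rw [one_mul] at hN
  exact ⟨N, hN, Ideal.add_mem _ (Ideal.mul_mem_left _ _ (uPolyO_mem_sq_idealAt x)) hp⟩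

theorem statement_2 {R : Type} [Field R] [LinearOrder R] [IsStrictOrderedRing R] (e : RealClosedExt R) {n : ℕ}
    (M : Set (MvPolynomial (Fin n) (Ofin R))) (hM : IsQuadraticModule M)
    (hArch : IsArchimedean M) (x : Fin n → Ofin R) :
    ∀ p ∈ (idealAt x) ^ 2, ∃ N : ℕ,
      (N : MvPolynomial (Fin n) (Ofin R)) * uPolyO x + p ∈ M ∧
      (N : MvPolynomial (Fin n) (Ofin R)) * uPolyO x + p ∈ (idealAt x) ^ 2 :=
  statement_2_general M hM hArch x
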